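/- Let $m=(m_0,m_1,\ldots)$ be a bounded sequence of integers with $2 \leq m_k \leq \lambda$ for all $k$, $M_0=1$, $M_{k+1}=m_kM_k$, and let $v(n)$ be the variation function of the base-$m$ digit expansion of $n$. Then for every $n \geq 1$, $\frac{1}{nM_n}\sum_{k=1}^{M_n-1} v(k) \geq \frac{2}{\lambda^2}$. -/

import Mathlib

open MeasureTheory Finset
open scoped ENNReal NNReal

noncomputable section

/-- Generalized number system: `M 0 = 1`, `M (k+1) = m k * M k`. -/
def Mgen (m : ℕ → ℕ) : ℕ → ℕ
  | 0 => 1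
  | k + 1 => m k * Mgen m k

/-- `j`-th digit of `n` in the generalized number system based on `m`. -/
def digit (m : ℕ → ℕ) (n j : ℕ) : ℕ := (n / Mgen m j) % m j

/-- `δ_j(n) = sign (n_j)`. -/
def del (m : ℕ → ℕ) (n j : ℕ) : ℕ := if digit m n j ≠ 0 then 1 else 0

/-- Variation function `v(n) = ∑_{j=1}^∞ |δ_{j+1} - δ_j| + δ_0`. -/
def vvar (m : ℕ → ℕ) (n : ℕ) : ℕ :=
  (∑' j : ℕ, if del m n (j + 2) ≠ del m n (j + 1) then 1 else 0) + del m n 0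

/-- The Vilenkin group: complete direct product of the cyclic groups `ZMod (m k)`. -/
abbrev Gm (m : ℕ → ℕ) := ∀ k : ℕ, ZMod (m k)

instance (m : ℕ → ℕ) (k : ℕ) : MeasurableSpace (ZMod (m k)) := ⊤

/-- Generalized Rademacher functions `r_k(x) = exp(2π i x_k / m_k)`. -/
def rad (m : ℕ → ℕ) (k : ℕ) (x : Gm m) : ℂ :=
  Complex.exp (2 * Real.pi * Complex.I * ((x k).val : ℂ) / (m k : ℂ))

/-- Vilenkin functions `ψ_n = ∏_k r_k^{n_k}` (finite product: digits vanish for `k > n`). -/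
def psi (m : ℕ → ℕ) (n : ℕ) (x : Gm m) : ℂ :=
  ∏ k ∈ Finset.range (n + 1), rad m k x ^ digit m n k

/-- Vilenkin-Dirichlet kernels `D_n = ∑_{k<n} ψ_k`. -/
def Dker (m : ℕ → ℕ) (n : ℕ) (x : Gm m) : ℂ :=
  ∑ k ∈ Finset.range n, psi m k x

/-- `I_N`: the subgroup of elements whose first `N` coordinates vanish. -/
def Icyl (m : ℕ → ℕ) (N : ℕ) : Set (Gm m) := {x | ∀ i < N, x i = 0}


section AuxLemmas

variable (m : ℕ → ℕ)

lemma Mgen_pos (hm : ∀ k, 1 ≤ m k) : ∀ k, 0 < Mgen m k := by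
  intro k
  induction k with
  | zero => simp [Mgen]
  | succ k ih => simpa [Mgen] using Nat.mul_pos (hm k) ih

lemma Mgen_factor {a b : ℕ} (h : a ≤ b) : ∃ Q, Mgen m b = Q * Mgen m a := by
  induction b, h using Nat.le_induction with
  | base => exact ⟨1, (one_mul _).symm⟩
  | succ b hb ih =>
    obtain ⟨Q, hQ⟩ := ih
    exact ⟨m b * Q, by simp [Mgen, hQ, mul_assoc]⟩

lemma Mgen_mono (hm : ∀ k, 1 ≤ m k) {a b : ℕ} (h : a ≤ b) : Mgen m a ≤ Mgen m b := by
  obtain ⟨Q, hQ⟩ := Mgen_factor m h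
  have hb := Mgen_pos m hm b
  have hQ1 : 1 ≤ Q := by
    rcases Nat.eq_zero_or_pos Q with h0 | h1
    · rw [h0, zero_mul] at hQ; omega
    · exact h1
  calc Mgen m a = 1 * Mgen m a := (one_mul _).symm
    _ ≤ Q * Mgen m a := Nat.mul_le_mul_right _ hQ1
    _ = Mgen m b := hQ.symm

lemma digit_eq_zero_of_lt (hm : ∀ k, 1 ≤ m k) {k n j : ℕ} (hk : k < Mgen m n)
    (hj : n ≤ j) : digit m k j = 0 := by
  unfold digit
  rw [Nat.div_eq_of_lt (hk.trans_le (Mgen_mono m hm hj))]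
  simp

lemma digit_add_mul_high (hm : ∀ k, 1 ≤ m k) {a b : ℕ} (h : a < b) (q r : ℕ) :
    digit m (q * Mgen m b + r) a = digit m r a := by
  obtain ⟨Q, hQ⟩ := Mgen_factor m (show a + 1 ≤ b from h)
  have hMa : 0 < Mgen m a := Mgen_pos m hm a
  have hM1 : Mgen m (a + 1) = m a * Mgen m a := rfl
  have key : q * Mgen m b + r = Mgen m a * (q * Q * m a) + r := by
    rw [hQ, hM1]; ring
  unfold digit
  rw [key, Nat.mul_add_div hMa,
    show q * Q * m a + r / Mgen m a = m a * (q * Q) + r / Mgen m a by ring,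
    Nat.mul_add_mod]

lemma digit_mul_add {a d t : ℕ} (hd : d < m a) (ht : t < Mgen m a) :
    digit m (d * Mgen m a + t) a = d := by
  have hMa : 0 < Mgen m a := lt_of_le_of_lt (Nat.zero_le t) ht
  unfold digit
  rw [show d * Mgen m a + t = Mgen m a * d + t by ring, Nat.mul_add_div hMa,
    Nat.div_eq_of_lt ht, add_zero, Nat.mod_eq_of_lt hd]

lemma sum_range_mul (g : ℕ → ℕ) (Q M : ℕ) :
    ∑ k ∈ Finset.range (Q * M), g k
      = ∑ q ∈ Finset.range Q, ∑ r ∈ Finset.range M, g (q * M + r) := by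
  induction Q with
  | zero => simp
  | succ Q ih =>
    rw [Nat.succ_mul, Finset.sum_range_add, ih, Finset.sum_range_succ]

lemma inner_del (hm : ∀ k, 2 ≤ m k) (a : ℕ) :
    Mgen m a ≤ ∑ r ∈ Finset.range (Mgen m (a + 1)), del m r a := by
  have hm1 : ∀ k, 1 ≤ m k := fun k => le_trans one_le_two (hm k)
  have hM1 : Mgen m (a + 1) = m a * Mgen m a := rfl
  rw [hM1, sum_range_mul]
  have h1 : ∀ t ∈ Finset.range (Mgen m a), del m (1 * Mgen m a + t) a = 1 := by
    intro t ht
    unfold del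
    rw [digit_mul_add m (hm a) (Finset.mem_range.mp ht)]
    simp
  calc Mgen m a = ∑ t ∈ Finset.range (Mgen m a), del m (1 * Mgen m a + t) a := by
        rw [Finset.sum_congr rfl h1]; simp
    _ ≤ ∑ d ∈ Finset.range (m a), ∑ t ∈ Finset.range (Mgen m a), del m (d * Mgen m a + t) a :=
        Finset.single_le_sum
          (f := fun d => ∑ t ∈ Finset.range (Mgen m a), del m (d * Mgen m a + t) a)
          (fun i _ => Nat.zero_le _) (Finset.mem_range.mpr (hm a))

lemma count_del {lam : ℕ} (hm : ∀ k, 2 ≤ m k ∧ m k ≤ lam) {a n : ℕ} (h : a < n) :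
    2 * Mgen m n ≤ lam ^ 2 * ∑ k ∈ Finset.range (Mgen m n), del m k a := by
  have hm1 : ∀ k, 1 ≤ m k := fun k => le_trans one_le_two (hm k).1
  obtain ⟨Q, hQ⟩ := Mgen_factor m (show a + 1 ≤ n from h)
  have hM1 : Mgen m (a + 1) = m a * Mgen m a := rfl
  have hsum : ∑ k ∈ Finset.range (Mgen m n), del m k a
      = Q * ∑ r ∈ Finset.range (Mgen m (a + 1)), del m r a := by
    have hd : ∀ q r : ℕ, del m (q * Mgen m (a + 1) + r) a = del m r a := by
      intro q r
      unfold del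
      rw [digit_add_mul_high m hm1 (Nat.lt_succ_self a)]
    rw [hQ, sum_range_mul]
    simp only [hd]
    simp [mul_comm]
  have hS : Q * Mgen m a ≤ ∑ k ∈ Finset.range (Mgen m n), del m k a := by
    rw [hsum]
    exact Nat.mul_le_mul_left Q (inner_del m (fun k => (hm k).1) a)
  have h2m : 2 * m a ≤ lam ^ 2 := by
    have h1 : m a ≤ lam := (hm a).2
    calc 2 * m a ≤ lam * lam := Nat.mul_le_mul (le_trans (hm a).1 h1) h1
      _ = lam ^ 2 := (sq lam).symm
  calc 2 * Mgen m n = (2 * m a) * (Q * Mgen m a) := by rw [hQ, hM1]; ring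
    _ ≤ lam ^ 2 * (Q * Mgen m a) := Nat.mul_le_mul_right _ h2m
    _ ≤ lam ^ 2 * ∑ k ∈ Finset.range (Mgen m n), del m k a := Nat.mul_le_mul_left _ hS

lemma count_pair {lam : ℕ} (hm : ∀ k, 2 ≤ m k ∧ m k ≤ lam) {a n : ℕ} (h : a + 3 ≤ n) :
    2 * Mgen m n ≤ lam ^ 2 * ∑ k ∈ Finset.range (Mgen m n),
      (if del m k (a + 2) ≠ del m k (a + 1) then 1 else 0) := by
  have hm1 : ∀ k, 1 ≤ m k := fun k => le_trans one_le_two (hm k).1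
  obtain ⟨Q, hQ⟩ := Mgen_factor m h
  have hM3 : Mgen m (a + 3) = m (a + 2) * Mgen m (a + 2) := rfl
  have hM2 : Mgen m (a + 2) = m (a + 1) * Mgen m (a + 1) := rfl
  set G : ℕ → ℕ := fun k => if del m k (a + 2) ≠ del m k (a + 1) then 1 else 0 with hG
  have hsum : ∑ k ∈ Finset.range (Mgen m n), G k
      = Q * ∑ r ∈ Finset.range (Mgen m (a + 3)), G r := by
    have hd : ∀ q r : ℕ, G (q * Mgen m (a + 3) + r) = G r := by
      intro q r
      simp only [hG, del,
        digit_add_mul_high m hm1 (show a + 1 < a + 3 by omega),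
        digit_add_mul_high m hm1 (show a + 2 < a + 3 by omega)]
      congr 1
    rw [hQ, sum_range_mul]
    simp only [hd]
    simp [mul_comm]
  -- value of G on d * M_{a+2} + s, with digits computed
  have hGval : ∀ d < m (a + 2), ∀ s < Mgen m (a + 2),
      G (d * Mgen m (a + 2) + s)
        = if (if d ≠ 0 then 1 else 0) ≠ del m s (a + 1) then (1:ℕ) else 0 := by
    intro d hd s hs
    simp only [hG, del, digit_mul_add m hd hs,
      digit_add_mul_high m hm1 (show a + 1 < a + 2 by omega)]
    congr 1
  -- inner sums for d = 0 and d = 1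
  have hinner0 : Mgen m (a + 1) ≤
      ∑ s ∈ Finset.range (Mgen m (a + 2)), G (0 * Mgen m (a + 2) + s) := by
    have he : ∀ s ∈ Finset.range (Mgen m (a + 2)), G (0 * Mgen m (a + 2) + s)
        = del m s (a + 1) := by
      intro s hs
      rw [hGval 0 (by have := (hm (a+2)).1; omega) s (Finset.mem_range.mp hs)]
      by_cases hc : digit m s (a + 1) ≠ 0 <;> simp [del, hc]
    rw [Finset.sum_congr rfl he]
    exact inner_del m (fun k => (hm k).1) (a + 1)
  have hinner1 : Mgen m (a + 1) ≤
      ∑ s ∈ Finset.range (Mgen m (a + 2)), G (1 * Mgen m (a + 2) + s) := by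
    have he : ∀ s ∈ Finset.range (Mgen m (a + 2)), G (1 * Mgen m (a + 2) + s)
        = 1 - del m s (a + 1) := by
      intro s hs
      rw [hGval 1 (by have := (hm (a+2)).1; omega) s (Finset.mem_range.mp hs)]
      by_cases hc : digit m s (a + 1) ≠ 0 <;> simp [del, hc]
    rw [Finset.sum_congr rfl he]
    -- count s < M_{a+2} with digit (a+1) = 0 : at least those with leading digit 0
    have h0 : ∀ t ∈ Finset.range (Mgen m (a + 1)),
        (1 : ℕ) - del m (0 * Mgen m (a + 1) + t) (a + 1) = 1 := by
      intro t ht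
      unfold del
      rw [digit_mul_add m (by have := (hm (a+1)).1; omega) (Finset.mem_range.mp ht)]
      simp
    calc Mgen m (a + 1)
        = ∑ t ∈ Finset.range (Mgen m (a + 1)),
            (1 - del m (0 * Mgen m (a + 1) + t) (a + 1)) := by
          rw [Finset.sum_congr rfl h0]; simp
      _ ≤ ∑ e ∈ Finset.range (m (a + 1)), ∑ t ∈ Finset.range (Mgen m (a + 1)),
            (1 - del m (e * Mgen m (a + 1) + t) (a + 1)) :=
          Finset.single_le_sum
            (f := fun e => ∑ t ∈ Finset.range (Mgen m (a + 1)),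
              (1 - del m (e * Mgen m (a + 1) + t) (a + 1)))
            (fun i _ => Nat.zero_le _)
            (Finset.mem_range.mpr (by have := (hm (a+1)).1; omega))
      _ = ∑ s ∈ Finset.range (Mgen m (a + 2)), (1 - del m s (a + 1)) := by
          rw [hM2, sum_range_mul]
  -- total inner sum over a block of length M_{a+3}
  have hT : 2 * Mgen m (a + 1) ≤ ∑ r ∈ Finset.range (Mgen m (a + 3)), G r := by
    rw [hM3, sum_range_mul]
    calc 2 * Mgen m (a + 1)
        = ∑ d ∈ ({0, 1} : Finset ℕ), Mgen m (a + 1) := by simp [two_mul]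
      _ ≤ ∑ d ∈ ({0, 1} : Finset ℕ),
            ∑ s ∈ Finset.range (Mgen m (a + 2)), G (d * Mgen m (a + 2) + s) := by
          refine Finset.sum_le_sum fun d hd => ?_
          simp only [Finset.mem_insert, Finset.mem_singleton] at hd
          rcases hd with rfl | rfl
          · exact hinner0
          · exact hinner1
      _ ≤ ∑ d ∈ Finset.range (m (a + 2)),
            ∑ s ∈ Finset.range (Mgen m (a + 2)), G (d * Mgen m (a + 2) + s) := by
          refine Finset.sum_le_sum_of_subset ?_
          intro x hx
          simp only [Finset.mem_insert, Finset.mem_singleton] at hx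
          have := (hm (a + 2)).1
          rcases hx with rfl | rfl <;> simp [Finset.mem_range] <;> omega
  have hmm2 : m (a + 1) * m (a + 2) ≤ lam ^ 2 := by
    calc m (a + 1) * m (a + 2) ≤ lam * lam :=
        Nat.mul_le_mul (hm (a+1)).2 (hm (a+2)).2
      _ = lam ^ 2 := (sq lam).symm
  calc 2 * Mgen m n
      = (m (a + 1) * m (a + 2)) * (Q * (2 * Mgen m (a + 1))) := by
        rw [hQ, hM3, hM2]; ring
    _ ≤ lam ^ 2 * (Q * (2 * Mgen m (a + 1))) := Nat.mul_le_mul_right _ hmm2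
    _ ≤ lam ^ 2 * (Q * ∑ r ∈ Finset.range (Mgen m (a + 3)), G r) := by
        exact Nat.mul_le_mul_left _ (Nat.mul_le_mul_left _ hT)
    _ = lam ^ 2 * ∑ k ∈ Finset.range (Mgen m n), G k := by rw [hsum]

lemma vvar_eq_finsum (hm1 : ∀ k, 1 ≤ m k) {k n : ℕ} (hk : k < Mgen m n) :
    vvar m k = (∑ j ∈ Finset.range (n - 1),
        if del m k (j + 2) ≠ del m k (j + 1) then 1 else 0) + del m k 0 := by
  unfold vvar
  congr 1
  apply tsum_eq_sum
  intro j hj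
  have hj' : n ≤ j + 1 := by
    simp only [Finset.mem_range] at hj; omega
  have h1 : del m k (j + 1) = 0 := by
    unfold del; rw [digit_eq_zero_of_lt m hm1 hk hj']; simp
  have h2 : del m k (j + 2) = 0 := by
    unfold del; rw [digit_eq_zero_of_lt m hm1 hk (by omega)]; simp
  simp [h1, h2]

lemma vvar_zero : vvar m 0 = 0 := by
  have h : ∀ j, del m 0 j = 0 := by intro j; simp [del, digit]
  simp [vvar, h]

lemma key_nat {lam : ℕ} (hm : ∀ k, 2 ≤ m k ∧ m k ≤ lam) (n : ℕ) (hn : 1 ≤ n) :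
    2 * (n * Mgen m n) ≤ lam ^ 2 * ∑ k ∈ Finset.Ico 1 (Mgen m n), vvar m k := by
  have hm1 : ∀ k, 1 ≤ m k := fun k => le_trans one_le_two (hm k).1
  have hMpos : 0 < Mgen m n := Mgen_pos m hm1 n
  have hIco : ∑ k ∈ Finset.Ico 1 (Mgen m n), vvar m k
      = ∑ k ∈ Finset.range (Mgen m n), vvar m k := by
    rw [Finset.range_eq_Ico, Finset.sum_eq_sum_Ico_succ_bot hMpos, vvar_zero, zero_add]
  rw [hIco]
  have hsplit : ∑ k ∈ Finset.range (Mgen m n), vvar m k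
      = (∑ j ∈ Finset.range (n - 1), ∑ k ∈ Finset.range (Mgen m n),
          if del m k (j + 2) ≠ del m k (j + 1) then 1 else 0)
        + ∑ k ∈ Finset.range (Mgen m n), del m k 0 := by
    calc ∑ k ∈ Finset.range (Mgen m n), vvar m k
        = ∑ k ∈ Finset.range (Mgen m n),
            ((∑ j ∈ Finset.range (n - 1),
              if del m k (j + 2) ≠ del m k (j + 1) then 1 else 0) + del m k 0) :=
          Finset.sum_congr rfl fun k hk =>
            vvar_eq_finsum m hm1 (Finset.mem_range.mp hk)
      _ = _ := by rw [Finset.sum_add_distrib, Finset.sum_comm]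
  have hA : ∀ j ∈ Finset.range (n - 1), 2 * Mgen m n ≤
      lam ^ 2 * ∑ k ∈ Finset.range (Mgen m n),
        (if del m k (j + 2) ≠ del m k (j + 1) then 1 else 0) := by
    intro j hj
    have hj' : j < n - 1 := Finset.mem_range.mp hj
    by_cases hcase : j + 3 ≤ n
    · exact count_pair m hm hcase
    · have hj2 : j + 2 = n := by omega
      have heq : ∀ k ∈ Finset.range (Mgen m n),
          (if del m k (j + 2) ≠ del m k (j + 1) then (1:ℕ) else 0) = del m k (j + 1) := by
        intro k hk
        have h0 : del m k (j + 2) = 0 := by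
          unfold del
          rw [digit_eq_zero_of_lt m hm1 (Finset.mem_range.mp hk) (by omega)]
          simp
        rw [h0]
        by_cases hd : digit m k (j + 1) ≠ 0 <;> simp [del, hd]
      rw [Finset.sum_congr rfl heq]
      exact count_del m hm (show j + 1 < n by omega)
  have hsumA : 2 * ((n - 1) * Mgen m n) ≤
      lam ^ 2 * ∑ j ∈ Finset.range (n - 1), ∑ k ∈ Finset.range (Mgen m n),
        (if del m k (j + 2) ≠ del m k (j + 1) then 1 else 0) := by
    calc 2 * ((n - 1) * Mgen m n)
        = ∑ _j ∈ Finset.range (n - 1), 2 * Mgen m n := by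
          simp [Finset.sum_const, Nat.smul_one_eq_cast]; ring
      _ ≤ ∑ j ∈ Finset.range (n - 1), lam ^ 2 * ∑ k ∈ Finset.range (Mgen m n),
            (if del m k (j + 2) ≠ del m k (j + 1) then 1 else 0) :=
          Finset.sum_le_sum hA
      _ = _ := (Finset.mul_sum _ _ _).symm
  have hsumB : 2 * Mgen m n ≤ lam ^ 2 * ∑ k ∈ Finset.range (Mgen m n), del m k 0 :=
    count_del m hm (show 0 < n from hn)
  obtain ⟨p, rfl⟩ : ∃ p, n = p + 1 := ⟨n - 1, (Nat.succ_pred_eq_of_pos hn).symm⟩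
  have hp : p + 1 - 1 = p := rfl
  rw [hsplit, Nat.mul_add]
  rw [hp] at hsumA
  have hexp : 2 * ((p + 1) * Mgen m (p + 1))
      = 2 * (p * Mgen m (p + 1)) + 2 * Mgen m (p + 1) := by ring
  rw [hexp]
  exact Nat.add_le_add hsumA hsumB

end AuxLemmas

/-- for a bounded Vilenkin sequence `2 ≤ m_k ≤ λ`, for every `n ≥ 1`,
`(1/(n M_n)) ∑_{k=1}^{M_n - 1} v(k) ≥ 2/λ²`. -/
theorem vvar_average_lower_bound (m : ℕ → ℕ) (lam : ℕ)
    (hm : ∀ k, 2 ≤ m k ∧ m k ≤ lam) (n : ℕ) (hn : 1 ≤ n) :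
    (2 : ℝ) / (lam : ℝ) ^ 2 ≤
      (1 / ((n : ℝ) * (Mgen m n : ℝ))) *
        ∑ k ∈ Finset.Ico 1 (Mgen m n), (vvar m k : ℝ) := by
  have hm1 : ∀ k, 1 ≤ m k := fun k => le_trans one_le_two (hm k).1
  have hlam2 : 2 ≤ lam := le_trans (hm 0).1 (hm 0).2
  have hkey := key_nat m hm n hn
  have hM : (0:ℝ) < (Mgen m n : ℝ) := by exact_mod_cast Mgen_pos m hm1 n
  have hn' : (0:ℝ) < (n:ℝ) := by exact_mod_cast hn
  have hlam : (0:ℝ) < (lam:ℝ) ^ 2 := by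
    have : (0:ℝ) < (lam:ℝ) := by exact_mod_cast (show 0 < lam by omega)
    positivity
  rw [one_div_mul_eq_div, div_le_div_iff₀ hlam (by positivity)]
  have hcast : (2:ℝ) * ((n:ℝ) * (Mgen m n : ℝ)) ≤
      (lam:ℝ) ^ 2 * ∑ k ∈ Finset.Ico 1 (Mgen m n), (vvar m k : ℝ) := by
    exact_mod_cast hkey
  linarith
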